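/- Let μ be a probability measure on ℝ^d with smooth, compactly supported density q, and let x ∈ ℝ^d with q(x) > 0. Let m_σ(x) denote the mean of the posterior ν_{σ,x}. Then the posterior mean converges to the observation point: m_σ(x) → x as σ → 0⁺. -/

import Mathlib

open MeasureTheory Filter Real
open scoped ENNReal NNReal

/-- The isotropic Gaussian density `φ_σ(w) = (2πσ²)^{-d/2} exp(-‖w‖²/(2σ²))` on `ℝ^d`. -/
noncomputable def gaussDensity (d : ℕ) (σ : ℝ) (w : EuclideanSpace ℝ (Fin d)) : ℝ :=
  (2 * π * σ ^ 2) ^ (-(d : ℝ) / 2) * Real.exp (-‖w‖ ^ 2 / (2 * σ ^ 2))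

/-- The posterior law `ν_{σ,x}(A) = (∫_A φ_σ(x - z) dμ(z)) / p_σ(x)`. -/
noncomputable def posterior {d : ℕ} (μ : Measure (EuclideanSpace ℝ (Fin d))) (σ : ℝ)
    (x : EuclideanSpace ℝ (Fin d)) : Measure (EuclideanSpace ℝ (Fin d)) :=
  (ENNReal.ofReal (∫ z, gaussDensity d σ (x - z) ∂μ))⁻¹ •
    μ.withDensity fun z => ENNReal.ofReal (gaussDensity d σ (x - z))

theorem aux_integrable_gauss {d : ℕ} {b : ℝ} (hb : 0 < b) :
    Integrable (fun v : EuclideanSpace ℝ (Fin d) => rexp (- b * ‖v‖^2)) := by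
  have h := (GaussianFourier.integrable_cexp_neg_mul_sq_norm_add (V := EuclideanSpace ℝ (Fin d))
    (b := (b:ℂ)) (by simpa using hb) 0 0).norm
  simp only [zero_mul, add_zero, mul_zero, Complex.norm_exp] at h
  have : ∀ v : EuclideanSpace ℝ (Fin d), (-(b:ℂ) * (‖v‖:ℂ) ^ 2).re = -b * ‖v‖^2 := by
    intro v; norm_cast
  simpa only [this] using h

theorem aux_moment_bound {σ t : ℝ} (hσ : 0 < σ) (ht : 0 ≤ t) :
    t * rexp (-t^2 / (2*σ^2)) ≤ 2*σ * rexp (-t^2/(4*σ^2)) := by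
  have he := Real.add_one_le_exp (t^2/(4*σ^2))
  have h1' : t ≤ 2*σ*(t^2/(4*σ^2)+1) := by
    rw [show 2*σ*(t^2/(4*σ^2)+1) = (t^2+4*σ^2)/(2*σ) by field_simp; ring,
      le_div_iff₀ (by positivity)]
    nlinarith [sq_nonneg (t-2*σ)]
  have h1 : t ≤ 2*σ * rexp (t^2/(4*σ^2)) :=
    h1'.trans (by have := mul_le_mul_of_nonneg_left he (by positivity : (0:ℝ) ≤ 2*σ); linarith)
  have h3 : rexp (-t^2/(4*σ^2)) * rexp (t^2/(4*σ^2)) = 1 := by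
    rw [← Real.exp_add]; ring_nf; exact Real.exp_zero
  have h2 : t * rexp (-t^2 / (2*σ^2)) = (t * rexp (-t^2/(4*σ^2))) * rexp (-t^2/(4*σ^2)) := by
    rw [mul_assoc, ← Real.exp_add]; ring_nf
  have h4 : t * rexp (-t^2/(4*σ^2)) ≤ 2*σ := by
    calc t * rexp (-t^2/(4*σ^2)) ≤ (2*σ * rexp (t^2/(4*σ^2))) * rexp (-t^2/(4*σ^2)) :=
          mul_le_mul_of_nonneg_right h1 (Real.exp_pos _).le
      _ = 2*σ := by rw [mul_assoc, mul_comm (rexp _), h3, mul_one]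
  rw [h2]
  exact mul_le_mul_of_nonneg_right h4 (Real.exp_pos _).le

/-- **Posterior mean tends to the observation.** Let `μ` be a probability measure on `ℝ^d`
with smooth compactly supported density `q` and let `x` satisfy `q(x) > 0`. Let `m_σ(x)` be
the mean of the posterior `ν_{σ,x}`. Then `m_σ(x) → x` as `σ → 0⁺`. -/
theorem posterior_mean_tendsto_obs {d : ℕ}
    (μ : Measure (EuclideanSpace ℝ (Fin d))) [IsProbabilityMeasure μ]
    (q : EuclideanSpace ℝ (Fin d) → ℝ) (hq : ContDiff ℝ (⊤ : ℕ∞) q)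
    (hqc : HasCompactSupport q) (hq0 : ∀ z, 0 ≤ q z)
    (hμ : μ = volume.withDensity fun z => ENNReal.ofReal (q z))
    (x : EuclideanSpace ℝ (Fin d)) (hx : 0 < q x)
    (m : ℝ → EuclideanSpace ℝ (Fin d))
    (hm : ∀ σ, m σ = ∫ z, z ∂(posterior μ σ x)) :
    Tendsto m (nhdsWithin 0 (Set.Ioi 0)) (nhds x) := by
  have hqcont : Continuous q := hq.continuous
  obtain ⟨M, hM'⟩ := hqc.exists_bound_of_continuous hqcont
  have hM : ∀ z, q z ≤ M := fun z => (le_abs_self _).trans (by simpa using hM' z)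
  have hM0 : 0 < M := lt_of_lt_of_le hx (hM x)
  -- neighborhood where q ≥ q x / 2
  obtain ⟨ε, hε, hball'⟩ : ∃ ε > 0, ∀ z ∈ Metric.ball x ε, q x / 2 < q z := by
    have h1 : ∀ᶠ z in nhds x, q x / 2 < q z :=
      (hqcont.tendsto x).eventually (eventually_gt_nhds (by linarith))
    exact Metric.eventually_nhds_iff_ball.mp h1
  set r := ε / 2 with hrdef
  have hr : 0 < r := by positivity
  have hball : ∀ z ∈ Metric.closedBall x r, q x / 2 ≤ q z := fun z hz =>
    (hball' z (Metric.mem_ball.mpr (lt_of_le_of_lt (Metric.mem_closedBall.mp hz) (by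
      rw [hrdef]; linarith)))).le
  set B := (volume (Metric.closedBall (0 : EuclideanSpace ℝ (Fin d)) 1)).toReal with hBdef
  have hB : 0 < B := ENNReal.toReal_pos
    (Metric.measure_closedBall_pos _ _ one_pos).ne' measure_closedBall_lt_top.ne
  have h2pi : (0:ℝ) < (2*π) ^ (-(d:ℝ)/2) := Real.rpow_pos_of_pos (by positivity) _
  set c₀ : ℝ := (q x / 2) * ((2*π) ^ (-(d:ℝ)/2) * Real.exp (-(1/2):ℝ)) * B with hc₀def
  have hc₀ : 0 < c₀ := by positivity
  have h2d : (0:ℝ) < 2 ^ ((d:ℝ)/2) := Real.rpow_pos_of_pos two_pos _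
  set C : ℝ := (2 * M * 2 ^ ((d:ℝ)/2)) * c₀⁻¹ with hCdef
  have key : ∀ σ : ℝ, 0 < σ → σ ≤ r → ‖m σ - x‖ ≤ C * σ := by
    intro σ hσ hσr
    have hσ2 : (0:ℝ) < σ^2 := by positivity
    set c : ℝ := (2*π*σ^2) ^ (-(d:ℝ)/2) with hcdef
    have hc : 0 < c := Real.rpow_pos_of_pos (by positivity) _
    set φ : EuclideanSpace ℝ (Fin d) → ℝ := fun z => gaussDensity d σ (x - z) with hφdef
    have hφ_eq : ∀ z, φ z = c * rexp (-‖x - z‖^2 / (2*σ^2)) := fun z => rfl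
    have hφpos : ∀ z, 0 < φ z := fun z => mul_pos hc (Real.exp_pos _)
    have hφcont : Continuous φ := by
      apply continuous_const.mul
      exact Real.continuous_exp.comp
        (((continuous_const.sub continuous_id).norm.pow 2).neg.div_const _)
    set h : EuclideanSpace ℝ (Fin d) → ℝ := fun z => q z * φ z with hhdef
    have hh0 : ∀ z, 0 ≤ h z := fun z => mul_nonneg (hq0 z) (hφpos z).le
    have hhcont : Continuous h := hqcont.mul hφcont
    have hhsupp : HasCompactSupport h := hqc.mul_right
    have hhint : Integrable h := hhcont.integrable_of_hasCompactSupport hhsupp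
    set D := ∫ z, h z with hDdef
    -- lower bound for D
    have hpt : ∀ z ∈ Metric.closedBall x σ, (q x / 2) * (c * Real.exp (-(1/2):ℝ)) ≤ h z := by
      intro z hz
      have hd : ‖x - z‖ ≤ σ := by
        rw [← dist_eq_norm, dist_comm]
        exact Metric.mem_closedBall.mp hz
      have he : Real.exp (-(1/2):ℝ) ≤ rexp (-‖x - z‖^2 / (2*σ^2)) := by
        apply Real.exp_le_exp.mpr
        rw [neg_div, neg_le_neg_iff, div_le_iff₀ (by positivity)]
        nlinarith [norm_nonneg (x - z)]
      have hqz : q x / 2 ≤ q z :=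
        hball z (Metric.closedBall_subset_closedBall hσr hz)
      have hinner : c * Real.exp (-(1/2):ℝ) ≤ c * rexp (-‖x - z‖^2 / (2*σ^2)) :=
        mul_le_mul_of_nonneg_left he hc.le
      calc (q x / 2) * (c * Real.exp (-(1/2):ℝ))
          ≤ q z * (c * rexp (-‖x - z‖^2 / (2*σ^2))) :=
            mul_le_mul hqz hinner (by positivity) (hq0 z)
        _ = h z := by show _ = q z * φ z; rw [hφ_eq z]
    have hvol : (volume (Metric.closedBall x σ)).toReal = σ^d * B := by
      rw [Measure.addHaar_closedBall' volume x hσ.le, finrank_euclideanSpace_fin,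
        ENNReal.toReal_mul, ENNReal.toReal_ofReal (by positivity), hBdef]
    have hcσ : c * σ^d = (2*π) ^ (-(d:ℝ)/2) := by
      rw [hcdef, Real.mul_rpow (by positivity) hσ2.le, ← Real.rpow_natCast σ d,
        ← Real.rpow_natCast σ 2, ← Real.rpow_mul hσ.le, mul_assoc, ← Real.rpow_add hσ]
      ring_nf
      simp
    have hDlb : c₀ ≤ D := by
      have h1 := setIntegral_ge_of_const_le_real (μ := volume) measurableSet_closedBall
        measure_closedBall_lt_top.ne hpt hhint.integrableOn
      have h2 : ∫ z in Metric.closedBall x σ, h z ≤ D :=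
        setIntegral_le_integral hhint (Filter.Eventually.of_forall hh0)
      rw [Measure.real, hvol] at h1
      have heq : (q x / 2) * (c * Real.exp (-(1/2):ℝ)) * (σ^d * B) = c₀ := by
        rw [hc₀def, ← hcσ]; ring
      linarith
    have hD0 : 0 < D := lt_of_lt_of_le hc₀ hDlb
    -- expression for the posterior mean
    have hμφ : ∫ z, φ z ∂μ = D := by
      rw [hμ, show (fun z => ENNReal.ofReal (q z)) = (fun z => ((q z).toNNReal : ℝ≥0∞)) from rfl,
        integral_withDensity_eq_integral_smul hqcont.measurable.real_toNNReal φ]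
      refine integral_congr_ae (Filter.Eventually.of_forall fun z => ?_)
      show (q z).toNNReal • φ z = h z
      rw [NNReal.smul_def, Real.coe_toNNReal _ (hq0 z), smul_eq_mul]
    have hwd : μ.withDensity (fun z => ENNReal.ofReal (φ z))
        = volume.withDensity (fun z => ENNReal.ofReal (h z)) := by
      rw [hμ, ← withDensity_mul _ hqcont.measurable.ennreal_ofReal
        hφcont.measurable.ennreal_ofReal]
      congr 1
      funext z
      show ENNReal.ofReal (q z) * ENNReal.ofReal (φ z) = ENNReal.ofReal (h z)
      rw [← ENNReal.ofReal_mul (hq0 z)]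
    have hmean : ∫ z, z ∂(posterior μ σ x) = D⁻¹ • ∫ z, h z • z := by
      rw [posterior, integral_smul_measure]
      rw [show (fun z => ENNReal.ofReal (gaussDensity d σ (x - z))) =
        (fun z => ENNReal.ofReal (φ z)) from rfl]
      rw [show (∫ z, gaussDensity d σ (x - z) ∂μ) = ∫ z, φ z ∂μ from rfl, hμφ, hwd]
      rw [show (fun z => ENNReal.ofReal (h z)) = (fun z => ((h z).toNNReal : ℝ≥0∞)) from rfl,
        integral_withDensity_eq_integral_smul hhcont.measurable.real_toNNReal _]
      rw [ENNReal.toReal_inv, ENNReal.toReal_ofReal hD0.le]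
      congr 1
      refine integral_congr_ae (Filter.Eventually.of_forall fun z => ?_)
      show (h z).toNNReal • z = h z • z
      rw [NNReal.smul_def, Real.coe_toNNReal _ (hh0 z)]
    -- numerator bound
    set N := ∫ z, h z * ‖z - x‖ with hNdef
    have hNint : Integrable (fun z => h z * ‖z - x‖) :=
      (hhcont.mul (continuous_id.sub continuous_const).norm).integrable_of_hasCompactSupport
        hhsupp.mul_right
    have hb4 : (0:ℝ) < 1/(4*σ^2) := by positivity
    have hgint : Integrable (fun z : EuclideanSpace ℝ (Fin d) => rexp (-(1/(4*σ^2)) * ‖z‖^2)) :=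
      aux_integrable_gauss hb4
    have hgxint : Integrable (fun z : EuclideanSpace ℝ (Fin d) =>
        rexp (-(1/(4*σ^2)) * ‖x - z‖^2)) := hgint.comp_sub_left x
    have hNpt : ∀ z, h z * ‖z - x‖ ≤ (M * c * (2*σ)) * rexp (-(1/(4*σ^2)) * ‖x - z‖^2) := by
      intro z
      have hmb := aux_moment_bound hσ (norm_nonneg (x - z))
      have hrw : ‖z - x‖ = ‖x - z‖ := norm_sub_rev z x
      have step1 : h z * ‖z - x‖ = q z * (c * (‖x-z‖ * rexp (-‖x-z‖^2/(2*σ^2)))) := by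
        show q z * φ z * ‖z - x‖ = _
        rw [hφ_eq z, hrw]; ring
      have step2 : q z * (c * (‖x-z‖ * rexp (-‖x-z‖^2/(2*σ^2))))
          ≤ M * (c * (2*σ * rexp (-‖x-z‖^2/(4*σ^2)))) := by
        apply mul_le_mul (hM z) (mul_le_mul_of_nonneg_left hmb hc.le) (by positivity) hM0.le
      have step3 : M * (c * (2*σ * rexp (-‖x-z‖^2/(4*σ^2))))
          = (M * c * (2*σ)) * rexp (-(1/(4*σ^2)) * ‖x - z‖^2) := by
        rw [show -(1/(4*σ^2)) * ‖x - z‖^2 = -‖x-z‖^2/(4*σ^2) by ring]; ring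
      rw [step1, ← step3]; exact step2
    have hgauss_val : (∫ z : EuclideanSpace ℝ (Fin d), rexp (-(1/(4*σ^2)) * ‖z‖^2))
        = (π/(1/(4*σ^2))) ^ ((d:ℝ)/2) := by
      rw [GaussianFourier.integral_rexp_neg_mul_sq_norm hb4]
      simp
    have hNle : N ≤ (M * c * (2*σ)) * ((π/(1/(4*σ^2))) ^ ((d:ℝ)/2)) := by
      have hmono := integral_mono hNint (hgxint.const_mul (M * c * (2*σ))) hNpt
      rwa [integral_const_mul, integral_sub_left_eq_self
        (fun z : EuclideanSpace ℝ (Fin d) => rexp (-(1/(4*σ^2)) * ‖z‖^2)) volume x,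
        hgauss_val] at hmono
    have hc4 : c * ((π/(1/(4*σ^2))) ^ ((d:ℝ)/2)) = 2 ^ ((d:ℝ)/2) := by
      have hane : (2*π*σ^2) ^ ((d:ℝ)/2) ≠ 0 :=
        ne_of_gt (Real.rpow_pos_of_pos (by positivity) _)
      have e1 : π/(1/(4*σ^2)) = 2 * (2*π*σ^2) := by field_simp; ring
      have e2 : ((2:ℝ)*(2*π*σ^2)) ^ ((d:ℝ)/2) = 2 ^ ((d:ℝ)/2) * (2*π*σ^2) ^ ((d:ℝ)/2) :=
        Real.mul_rpow (by norm_num) (by positivity)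
      have e3 : c = ((2*π*σ^2) ^ ((d:ℝ)/2))⁻¹ := by
        rw [hcdef, neg_div, Real.rpow_neg (by positivity)]
      rw [e1, e2, e3, mul_comm ((2:ℝ) ^ ((d:ℝ)/2)), ← mul_assoc,
        inv_mul_cancel₀ hane, one_mul]
    have hN2 : N ≤ (2 * M * 2 ^ ((d:ℝ)/2)) * σ := by
      calc N ≤ (M * c * (2*σ)) * ((π/(1/(4*σ^2))) ^ ((d:ℝ)/2)) := hNle
        _ = (2 * M * σ) * (c * ((π/(1/(4*σ^2))) ^ ((d:ℝ)/2))) := by ring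
        _ = (2 * M * 2 ^ ((d:ℝ)/2)) * σ := by rw [hc4]; ring
    -- assembling
    have hzint : Integrable (fun z => h z • z) :=
      (hhcont.smul continuous_id).integrable_of_hasCompactSupport hhsupp.smul_right
    have hJ : (∫ z, h z • (z - x)) = (∫ z, h z • z) - D • x := by
      have heq : (fun z => h z • (z - x)) = fun z => h z • z - h z • x :=
        funext fun z => smul_sub (h z) z x
      rw [heq, integral_sub hzint (hhint.smul_const x), integral_smul_const]
    have hnorm : ‖∫ z, h z • (z - x)‖ ≤ N := by
      refine (norm_integral_le_integral_norm _).trans (le_of_eq ?_)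
      rw [hNdef]
      refine integral_congr_ae (Filter.Eventually.of_forall fun z => ?_)
      show ‖h z • (z - x)‖ = h z * ‖z - x‖
      rw [norm_smul, Real.norm_eq_abs, abs_of_nonneg (hh0 z)]
    have hmx : m σ - x = D⁻¹ • (∫ z, h z • (z - x)) := by
      rw [hm σ, hmean, hJ, smul_sub, smul_smul, inv_mul_cancel₀ hD0.ne', one_smul]
    calc ‖m σ - x‖ = D⁻¹ * ‖∫ z, h z • (z - x)‖ := by
          rw [hmx, norm_smul, Real.norm_eq_abs, abs_of_nonneg (inv_nonneg.mpr hD0.le)]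
      _ ≤ c₀⁻¹ * ((2 * M * 2 ^ ((d:ℝ)/2)) * σ) := by
          apply mul_le_mul (inv_anti₀ hc₀ hDlb) (hnorm.trans hN2) (norm_nonneg _)
            (inv_nonneg.mpr hc₀.le)
      _ = C * σ := by rw [hCdef]; ring
  -- squeeze
  have hev : ∀ᶠ σ in nhdsWithin 0 (Set.Ioi 0), ‖m σ - x‖ ≤ C * σ := by
    filter_upwards [Ioc_mem_nhdsGT hr] with σ hσ
    exact key σ hσ.1 hσ.2
  rw [tendsto_iff_norm_sub_tendsto_zero]
  apply squeeze_zero' (Filter.Eventually.of_forall fun σ => norm_nonneg _) hev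
  have hten : Tendsto (fun σ : ℝ => C * σ) (nhds 0) (nhds (C * 0)) :=
    (continuous_const.mul continuous_id).tendsto 0
  simpa using hten.mono_left nhdsWithin_le_nhds
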